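/- In the very sparse limit ε → 0, the soft-thresholding minimax risk satisfies M#(ε) = 2ε log(1/ε)(1 + o(1)), where M#(ε) = min_{α≥0} M(ε,α) and M(ε,α) = ε(1+α²) + (1−ε)[2(1+α²)Φ(−α) − 2αφ(α)]. -/

import Mathlib

/-- Standard Gaussian density φ. -/
noncomputable def stdGaussPDF (z : ℝ) : ℝ := Real.exp (-z^2/2) / Real.sqrt (2*Real.pi)

/-- Standard Gaussian CDF Φ. -/
noncomputable def stdGaussCDF (z : ℝ) : ℝ := ∫ u in Set.Iic z, stdGaussPDF u

/-- Worst-case soft thresholding MSE M(ε,α). -/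
noncomputable def Mrisk (ε α : ℝ) : ℝ :=
  ε*(1+α^2) + (1-ε)*(2*(1+α^2) * stdGaussCDF (-α) - 2*α * stdGaussPDF α)

/-- Soft-thresholding minimax risk M#(ε) = min over α ≥ 0 of M(ε,α). -/
noncomputable def Mhash (ε : ℝ) : ℝ := sInf (Mrisk ε '' Set.Ici 0)

/-!
Write `M(ε, α) = ε (1 + α²) + (1 - ε) ρ(α)`, where `ρ(α) = 2 ∫_α^∞ (u - α)² φ(u) du` is the risk
at zero signal, and parametrize `ε = exp (-t² / 2)`, so that `2 ε log (1 / ε) = ε t²`.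
The threshold `α = t` and the Mills ratio bound `ρ(t) ≤ 2 φ(t) / t ≤ 2 ε` give `M# ≤ ε (t² + 3)`.
Conversely, fix `c < 1`: a threshold `α ≥ c t - 2` costs at least `ε (c t - 2)²`, while a
threshold `α < c t - 2` costs at least `ρ(α) / 2 ≥ φ(c t) ∝ exp (-c² t² / 2)`, which is eventually
much larger than `ε t²`. Letting `c → 1` gives the matching lower bound.
-/

open MeasureTheory Set Filter Real Topology

lemma stdGaussPDF_pos (x : ℝ) : 0 < stdGaussPDF x := by unfold stdGaussPDF; positivity

lemma stdGaussPDF_neg (x : ℝ) : stdGaussPDF (-x) = stdGaussPDF x := by simp [stdGaussPDF]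

lemma stdGaussPDF_eq_exp_neg_mul_sq (x : ℝ) :
    stdGaussPDF x = exp (-(1 / 2) * x ^ 2) / √(2 * π) := by
  unfold stdGaussPDF; ring_nf

lemma continuous_stdGaussPDF : Continuous stdGaussPDF := by unfold stdGaussPDF; fun_prop

lemma hasDerivAt_stdGaussPDF (x : ℝ) : HasDerivAt stdGaussPDF (-x * stdGaussPDF x) x := by
  have h := (((hasDerivAt_pow 2 x).const_mul (-(1 / 2) : ℝ)).exp).div_const √(2 * π)
  rw [funext stdGaussPDF_eq_exp_neg_mul_sq]
  exact h.congr_deriv (by norm_num; ring)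

lemma stdGaussPDF_le_of_le {x y : ℝ} (hx : 0 ≤ x) (hxy : x ≤ y) :
    stdGaussPDF y ≤ stdGaussPDF x := by
  unfold stdGaussPDF
  gcongr

lemma integrable_pow_mul_stdGaussPDF (n : ℕ) : Integrable fun u : ℝ => u ^ n * stdGaussPDF u := by
  have h := (integrable_rpow_mul_exp_neg_mul_sq (b := 1 / 2) (by norm_num)
    (s := n) (by linarith [n.cast_nonneg (α := ℝ)])).div_const √(2 * π)
  simpa only [stdGaussPDF_eq_exp_neg_mul_sq, rpow_natCast, mul_div_assoc] using h

lemma integrable_stdGaussPDF : Integrable stdGaussPDF := by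
  simpa using integrable_pow_mul_stdGaussPDF 0

lemma tendsto_pow_mul_stdGaussPDF_atTop (n : ℕ) :
    Tendsto (fun u : ℝ => u ^ n * stdGaussPDF u) atTop (𝓝 0) := by
  have hexp : Tendsto (fun x : ℝ => exp (-(1 / 2) * x)) atTop (𝓝 0) :=
    tendsto_exp_atBot.comp (tendsto_id.const_mul_atTop_of_neg (by norm_num))
  have h := ((rpow_mul_exp_neg_mul_sq_isLittleO_exp_neg (b := 1 / 2) (by norm_num) n)
    |>.tendsto_zero_of_tendsto hexp).div_const √(2 * π)
  simpa only [stdGaussPDF_eq_exp_neg_mul_sq, rpow_natCast, mul_div_assoc, zero_div] using h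

lemma integral_Ioi_mul_stdGaussPDF (a : ℝ) :
    ∫ u in Ioi a, u * stdGaussPDF u = stdGaussPDF a := by
  have h := integral_Ioi_of_hasDerivAt_of_tendsto (f := fun u => -stdGaussPDF u)
    (f' := fun u => u * stdGaussPDF u) (a := a) (m := 0)
    continuous_stdGaussPDF.neg.continuousWithinAt
    (fun x _ => (hasDerivAt_stdGaussPDF x).neg.congr_deriv (by ring))
    (by simpa using (integrable_pow_mul_stdGaussPDF 1).integrableOn)
    (by simpa using (tendsto_pow_mul_stdGaussPDF_atTop 0).neg)
  simpa using h

lemma integral_Ioi_sq_mul_stdGaussPDF (a : ℝ) :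
    ∫ u in Ioi a, u ^ 2 * stdGaussPDF u = a * stdGaussPDF a + ∫ u in Ioi a, stdGaussPDF u := by
  have hderiv (x : ℝ) : HasDerivAt (fun u => -(u * stdGaussPDF u))
      (x ^ 2 * stdGaussPDF x - stdGaussPDF x) x :=
    ((hasDerivAt_id x).mul (hasDerivAt_stdGaussPDF x)).neg.congr_deriv (by simp; ring)
  have h := integral_Ioi_of_hasDerivAt_of_tendsto (f := fun u => -(u * stdGaussPDF u))
    (a := a) (m := 0)
    (continuous_id.mul continuous_stdGaussPDF).neg.continuousWithinAt (fun x _ => hderiv x)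
    ((integrable_pow_mul_stdGaussPDF 2).sub integrable_stdGaussPDF).integrableOn
    (by simpa using (tendsto_pow_mul_stdGaussPDF_atTop 1).neg)
  rw [integral_sub (integrable_pow_mul_stdGaussPDF 2).integrableOn
    integrable_stdGaussPDF.integrableOn] at h
  linarith

lemma stdGaussCDF_neg (a : ℝ) : stdGaussCDF (-a) = ∫ u in Ioi a, stdGaussPDF u := by
  rw [stdGaussCDF, ← integral_comp_neg_Ioi]
  simp only [stdGaussPDF_neg]

lemma integral_Ioi_stdGaussPDF_le {a : ℝ} (ha : 0 < a) :
    ∫ u in Ioi a, stdGaussPDF u ≤ stdGaussPDF a / a := by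
  have h : ∫ u in Ioi a, stdGaussPDF u ≤ ∫ u in Ioi a, a⁻¹ * (u * stdGaussPDF u) := by
    refine setIntegral_mono_on integrable_stdGaussPDF.integrableOn
      (by simpa using ((integrable_pow_mul_stdGaussPDF 1).const_mul a⁻¹).integrableOn)
      measurableSet_Ioi fun u hu => ?_
    rw [← mul_assoc, ← div_eq_inv_mul]
    exact le_mul_of_one_le_left (stdGaussPDF_pos u).le ((one_le_div ha).2 (le_of_lt hu))
  rwa [integral_const_mul, integral_Ioi_mul_stdGaussPDF, ← div_eq_inv_mul] at h

lemma integrable_sq_sub_mul_stdGaussPDF (a : ℝ) :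
    Integrable fun u : ℝ => (u - a) ^ 2 * stdGaussPDF u := by
  have h := ((integrable_pow_mul_stdGaussPDF 2).sub
    ((integrable_pow_mul_stdGaussPDF 1).const_mul (2 * a))).add
    (integrable_stdGaussPDF.const_mul (a ^ 2))
  exact h.congr (.of_forall fun u => by simp only [Pi.add_apply, Pi.sub_apply]; ring)

/-- The soft-thresholding MSE `E[η(Z; α)²] = E[(|Z| - α)₊²]` at zero signal. -/
noncomputable def riskAtZero (α : ℝ) : ℝ := 2 * ∫ u in Ioi α, (u - α) ^ 2 * stdGaussPDF u

lemma riskAtZero_eq (α : ℝ) :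
    riskAtZero α = 2 * ((1 + α ^ 2) * (∫ u in Ioi α, stdGaussPDF u) - α * stdGaussPDF α) := by
  have hexpand : (fun u => (u - α) ^ 2 * stdGaussPDF u) = fun u =>
      (u ^ 2 * stdGaussPDF u - 2 * α * (u ^ 1 * stdGaussPDF u)) + α ^ 2 * stdGaussPDF u := by
    ext u; ring
  have hint : Integrable fun u => u ^ 2 * stdGaussPDF u - 2 * α * (u ^ 1 * stdGaussPDF u) :=
    (integrable_pow_mul_stdGaussPDF 2).sub ((integrable_pow_mul_stdGaussPDF 1).const_mul _)
  rw [riskAtZero, hexpand, integral_add hint.integrableOn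
      (integrable_stdGaussPDF.const_mul _).integrableOn,
    integral_sub (integrable_pow_mul_stdGaussPDF 2).integrableOn
      ((integrable_pow_mul_stdGaussPDF 1).const_mul _).integrableOn,
    integral_const_mul, integral_const_mul, integral_Ioi_sq_mul_stdGaussPDF]
  simp only [pow_one, integral_Ioi_mul_stdGaussPDF]
  ring

lemma Mrisk_eq (ε α : ℝ) : Mrisk ε α = ε * (1 + α ^ 2) + (1 - ε) * riskAtZero α := by
  rw [Mrisk, riskAtZero_eq, stdGaussCDF_neg]
  ring

lemma riskAtZero_nonneg (α : ℝ) : 0 ≤ riskAtZero α :=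
  mul_nonneg zero_le_two <| setIntegral_nonneg measurableSet_Ioi fun u _ =>
    mul_nonneg (sq_nonneg _) (stdGaussPDF_pos u).le

lemma riskAtZero_le {α : ℝ} (hα : 0 < α) : riskAtZero α ≤ 2 * stdGaussPDF α / α := by
  have hmills := integral_Ioi_stdGaussPDF_le hα
  calc riskAtZero α ≤ 2 * ((1 + α ^ 2) * (stdGaussPDF α / α) - α * stdGaussPDF α) := by
        rw [riskAtZero_eq]; gcongr
    _ = 2 * stdGaussPDF α / α := by field_simp; ring

lemma two_mul_stdGaussPDF_le_riskAtZero {α : ℝ} (hα : 0 ≤ α) :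
    2 * stdGaussPDF (α + 2) ≤ riskAtZero α := by
  have hint := (integrable_sq_sub_mul_stdGaussPDF α).integrableOn (s := Ioc (α + 1) (α + 2))
  have hIoc : ∫ _ in Ioc (α + 1) (α + 2), stdGaussPDF (α + 2)
      ≤ ∫ u in Ioc (α + 1) (α + 2), (u - α) ^ 2 * stdGaussPDF u := by
    refine setIntegral_mono_on (integrableOn_const (by simp)) hint measurableSet_Ioc
      fun u hu => ?_
    have h1 : 1 ≤ (u - α) ^ 2 := by nlinarith [hu.1]
    calc stdGaussPDF (α + 2) ≤ stdGaussPDF u := stdGaussPDF_le_of_le (by linarith [hu.1]) hu.2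
      _ ≤ _ := le_mul_of_one_le_left (stdGaussPDF_pos u).le h1
  have hIoi : ∫ u in Ioc (α + 1) (α + 2), (u - α) ^ 2 * stdGaussPDF u
      ≤ ∫ u in Ioi α, (u - α) ^ 2 * stdGaussPDF u :=
    setIntegral_mono_set (integrable_sq_sub_mul_stdGaussPDF α).integrableOn
      (.of_forall fun u => mul_nonneg (sq_nonneg _) (stdGaussPDF_pos u).le)
      (Ioc_subset_Ioi_self.trans (Ioi_subset_Ioi (by linarith))).eventuallyLE
  rw [setIntegral_const, volume_real_Ioc_of_le (by linarith), show α + 2 - (α + 1) = 1 by ring,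
    one_smul] at hIoc
  rw [riskAtZero]
  linarith

section Minimax

variable {ε : ℝ}

lemma Mrisk_nonneg (h0 : 0 ≤ ε) (h1 : ε ≤ 1) (α : ℝ) : 0 ≤ Mrisk ε α := by
  rw [Mrisk_eq]
  exact add_nonneg (by positivity) (mul_nonneg (by linarith) (riskAtZero_nonneg α))

lemma Mhash_le_Mrisk (h0 : 0 ≤ ε) (h1 : ε ≤ 1) {α : ℝ} (hα : 0 ≤ α) : Mhash ε ≤ Mrisk ε α :=
  csInf_le ⟨0, by rintro _ ⟨a, -, rfl⟩; exact Mrisk_nonneg h0 h1 a⟩ ⟨α, hα, rfl⟩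

lemma Mrisk_le (h0 : 0 ≤ ε) {α : ℝ} (hα : 0 < α) :
    Mrisk ε α ≤ ε * (1 + α ^ 2) + 2 * stdGaussPDF α / α := by
  rw [Mrisk_eq]
  nlinarith [riskAtZero_le hα, riskAtZero_nonneg α]

lemma min_le_Mrisk (h0 : 0 ≤ ε) (h1 : ε ≤ 1 / 2) {α s : ℝ} (hα : 0 ≤ α) (hs : 0 ≤ s) :
    min (ε * s ^ 2) (stdGaussPDF (s + 2)) ≤ Mrisk ε α := by
  rw [Mrisk_eq]
  have hR := riskAtZero_nonneg α
  rcases le_total s α with hsα | hαs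
  · refine min_le_of_left_le ?_
    have := mul_le_mul_of_nonneg_left (pow_le_pow_left₀ hs hsα 2) h0
    nlinarith
  · refine min_le_of_right_le ?_
    have := stdGaussPDF_le_of_le (by linarith) (by linarith : α + 2 ≤ s + 2)
    nlinarith [two_mul_stdGaussPDF_le_riskAtZero hα]

lemma min_le_Mhash (h0 : 0 ≤ ε) (h1 : ε ≤ 1 / 2) {s : ℝ} (hs : 0 ≤ s) :
    min (ε * s ^ 2) (stdGaussPDF (s + 2)) ≤ Mhash ε :=
  le_csInf ⟨_, 0, self_mem_Ici, rfl⟩ fun _ ⟨_, hα, hM⟩ => hM ▸ min_le_Mrisk h0 h1 hα hs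

end Minimax

lemma Mhash_exp_le {t : ℝ} (ht : 1 ≤ t) :
    Mhash (exp (-t ^ 2 / 2)) ≤ exp (-t ^ 2 / 2) * (t ^ 2 + 3) := by
  set ε := exp (-t ^ 2 / 2)
  have hε1 : ε ≤ 1 := exp_le_one_iff.2 (by nlinarith)
  have hφ : stdGaussPDF t ≤ ε :=
    div_le_self (exp_pos _).le (one_le_sqrt.2 (by nlinarith [pi_gt_three]))
  have hφt : stdGaussPDF t / t ≤ stdGaussPDF t := div_le_self (stdGaussPDF_pos t).le ht
  calc Mhash ε ≤ Mrisk ε t := Mhash_le_Mrisk (exp_pos _).le hε1 (by linarith)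
    _ ≤ ε * (1 + t ^ 2) + 2 * stdGaussPDF t / t := Mrisk_le (exp_pos _).le (by linarith)
    _ ≤ ε * (t ^ 2 + 3) := by rw [mul_div_assoc]; linarith

lemma eventually_le_Mhash_exp {c : ℝ} (hc0 : 0 < c) (hc1 : c < 1) :
    ∀ᶠ t in atTop, exp (-t ^ 2 / 2) * (c * t - 2) ^ 2 ≤ Mhash (exp (-t ^ 2 / 2)) := by
  have hgrowth : ∀ᶠ t : ℝ in atTop, √(2 * π) * t ^ 2 ≤ exp ((1 - c ^ 2) / 2 * t ^ 2) := by
    have hb : 0 < (1 - c ^ 2) / 2 := by nlinarith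
    have h := ((isLittleO_pow_exp_pos_mul_atTop 1 hb).comp_tendsto
      (tendsto_pow_atTop two_ne_zero)).bound (c := (√(2 * π))⁻¹) (by positivity)
    filter_upwards [h] with t ht
    simp only [Function.comp, pow_one, norm_pow, Real.norm_eq_abs, sq_abs, abs_exp] at ht
    rwa [← le_div_iff₀' (by positivity), div_eq_inv_mul]
  filter_upwards [hgrowth, eventually_ge_atTop (2 / c), eventually_ge_atTop 2]
    with t hgrowth htc ht2
  set ε := exp (-t ^ 2 / 2)
  have hct : 2 ≤ c * t := by rwa [div_le_iff₀' hc0] at htc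
  have hε : ε ≤ 1 / 2 :=
    (exp_le_exp.2 (by nlinarith)).trans exp_neg_one_lt_half.le
  have hst : (c * t - 2) ^ 2 ≤ t ^ 2 := pow_le_pow_left₀ (by linarith) (by nlinarith) 2
  have hφ : ε * (c * t - 2) ^ 2 ≤ stdGaussPDF (c * t - 2 + 2) := by
    rw [sub_add_cancel, stdGaussPDF, le_div_iff₀ (by positivity)]
    calc ε * (c * t - 2) ^ 2 * √(2 * π) ≤ ε * (√(2 * π) * t ^ 2) := by
          rw [mul_assoc, mul_comm _ √(2 * π)]; gcongr
      _ ≤ ε * exp ((1 - c ^ 2) / 2 * t ^ 2) := by gcongr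
      _ = exp (-(c * t) ^ 2 / 2) := by rw [← exp_add]; ring_nf
  calc ε * (c * t - 2) ^ 2 = min (ε * (c * t - 2) ^ 2) (stdGaussPDF (c * t - 2 + 2)) :=
        (min_eq_left hφ).symm
    _ ≤ Mhash ε := min_le_Mhash (exp_pos _).le hε (by linarith)

lemma tendsto_Mhash_exp_div :
    Tendsto (fun t => Mhash (exp (-t ^ 2 / 2)) / (exp (-t ^ 2 / 2) * t ^ 2)) atTop (𝓝 1) := by
  refine tendsto_order.2 ⟨fun a ha => ?_, fun a ha => ?_⟩
  · obtain ⟨b, hab, hb1⟩ := exists_between (max_lt ha one_pos)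
    have hab' : a < b := (le_max_left a 0).trans_lt hab
    have hb0 : 0 < b := (le_max_right a 0).trans_lt hab
    have hlim : Tendsto (fun t : ℝ => (√b - 2 / t) ^ 2) atTop (𝓝 b) := by
      simpa [sq_sqrt hb0.le] using ((tendsto_const_nhds (x := √b)).sub
        ((tendsto_const_nhds (x := (2 : ℝ))).div_atTop tendsto_id)).pow 2
    have hb1' : √b < 1 := (sqrt_lt' one_pos).2 (by simpa using hb1)
    filter_upwards [hlim.eventually (lt_mem_nhds hab'),
      eventually_le_Mhash_exp (sqrt_pos.2 hb0) hb1', eventually_gt_atTop 0] with t hlt hle ht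
    refine hlt.trans_le ?_
    rw [le_div_iff₀ (by positivity)]
    calc (√b - 2 / t) ^ 2 * (exp (-t ^ 2 / 2) * t ^ 2)
        = exp (-t ^ 2 / 2) * (√b * t - 2) ^ 2 := by field_simp
      _ ≤ _ := hle
  · have hlim : Tendsto (fun t : ℝ => 1 + 3 / t ^ 2) atTop (𝓝 1) := by
      simpa using (tendsto_const_nhds (x := (1 : ℝ))).add
        ((tendsto_const_nhds (x := (3 : ℝ))).div_atTop (tendsto_pow_atTop two_ne_zero))
    filter_upwards [hlim.eventually (gt_mem_nhds ha), eventually_ge_atTop 1] with t hlt ht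
    refine lt_of_le_of_lt ?_ hlt
    rw [div_le_iff₀ (by positivity)]
    calc Mhash _ ≤ exp (-t ^ 2 / 2) * (t ^ 2 + 3) := Mhash_exp_le ht
      _ = (1 + 3 / t ^ 2) * (exp (-t ^ 2 / 2) * t ^ 2) := by field_simp

/-- In the very sparse limit, M#(ε) = 2ε log(1/ε)(1 + o(1)) as ε → 0⁺. -/
theorem minimax_risk_sparse_asymptotics :
    Filter.Tendsto (fun ε : ℝ => Mhash ε / (2 * ε * Real.log (1/ε)))
      (nhdsWithin 0 (Set.Ioi 0)) (nhds 1) := by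
  have hlog : Tendsto (fun ε : ℝ => log (1 / ε)) (𝓝[>] 0) atTop :=
    tendsto_log_atTop.comp (tendsto_inv_nhdsGT_zero.congr fun ε => (one_div ε).symm)
  have ht : Tendsto (fun ε : ℝ => √(2 * log (1 / ε))) (𝓝[>] 0) atTop :=
    tendsto_sqrt_atTop.comp (hlog.const_mul_atTop two_pos)
  refine (tendsto_Mhash_exp_div.comp ht).congr' ?_
  filter_upwards [self_mem_nhdsWithin, hlog.eventually_ge_atTop 0] with ε hε hlogε
  have hexp : exp (-√(2 * log (1 / ε)) ^ 2 / 2) = ε := by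
    rw [sq_sqrt (by positivity), one_div, log_inv]
    simp [exp_log (mem_Ioi.1 hε)]
  simp only [Function.comp_apply]
  rw [hexp, sq_sqrt (by positivity)]
  ring
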